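/- arXiv:2504.09312 — 3 statements merged into one kernel-verified Lean document; each statement's English description precedes it below -/
import Mathlib

section
/- Let f : {0,1}^n → {0,1} be a nonzero Boolean function such that rel-dist(f,g) ≥ ε for every k-junta g : {0,1}^n → {0,1}. Then for every subset J of [n] with |J| ≤ k, Pr[f(u_J ∘ w) = 0] ≥ ε/4, where u is drawn uniformly from f⁻¹(1), w is drawn uniformly from {0,1}^{[n]∖J}, and u_J ∘ w denotes the string agreeing with u on coordinates in J and with w on coordinates outside J. -/
open Finset
open scoped symmDiff

def satOf {n : ℕ} (f : (Fin n → Bool) → Bool) : Finset (Fin n → Bool) :=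
  Finset.univ.filter (fun x => f x = true)

noncomputable def relDist {n : ℕ} (f g : (Fin n → Bool) → Bool) : ℝ :=
  ((satOf f ∆ satOf g).card : ℝ) / ((satOf f).card : ℝ)

def IsJuntaOn {n : ℕ} (J : Finset (Fin n)) (f : (Fin n → Bool) → Bool) : Prop :=
  ∀ x y : Fin n → Bool, (∀ i ∈ J, x i = y i) → f x = f y

def IsKJunta {n : ℕ} (k : ℕ) (f : (Fin n → Bool) → Bool) : Prop :=
  ∃ J : Finset (Fin n), J.card ≤ k ∧ IsJuntaOn J f

/-- If f is ε-far in relative distance from every k-junta, then for every J with |J| ≤ k,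
rerandomizing the coordinates outside J in a uniform satisfying assignment of f produces an
unsatisfying assignment with probability at least ε/4.  (The probability is expressed by
counting pairs (u, v) with u ∈ f⁻¹(1) and v uniform over all of {0,1}ⁿ; the combined
string uses u on J and v off J.) -/
theorem stmt7 {n : ℕ} (k : ℕ) (ε : ℝ) (f : (Fin n → Bool) → Bool)
    (hne : (satOf f).Nonempty)
    (hfar : ∀ g : (Fin n → Bool) → Bool, IsKJunta k g → ε ≤ relDist f g)
    (J : Finset (Fin n)) (hJ : J.card ≤ k) :
    (ε / 4) * (((satOf f).card : ℝ) * 2 ^ n)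
      ≤ (((satOf f ×ˢ (Finset.univ : Finset (Fin n → Bool))).filter
            (fun p => f (fun i => if i ∈ J then p.1 i else p.2 i) = false)).card : ℝ) := by
  classical
  set c : (Fin n → Bool) → (Fin n → Bool) → (Fin n → Bool) :=
    fun u v i => if i ∈ J then u i else v i with hc
  have hcc : ∀ u v : Fin n → Bool, c (c u v) (c v u) = u := by
    intro u v; funext i
    by_cases h : i ∈ J <;> simp [hc, h]
  set T : (Fin n → Bool) → ℕ :=
    fun x => (Finset.univ.filter (fun v => f (c x v) = true)).card with hT
  set F : (Fin n → Bool) → ℕ :=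
    fun x => (Finset.univ.filter (fun v => f (c x v) = false)).card with hF
  have hunivcard : (Finset.univ : Finset (Fin n → Bool)).card = 2 ^ n := by
    simp [Finset.card_univ]
  have hTF : ∀ x, T x + F x = 2 ^ n := by
    intro x
    have h := Finset.card_filter_add_card_filter_not
      (s := (Finset.univ : Finset (Fin n → Bool))) (p := fun v => f (c x v) = true)
    simp only [Bool.not_eq_true] at h
    rw [hunivcard] at h
    exact h
  set g : (Fin n → Bool) → Bool := fun x => decide (2 ^ n ≤ 2 * T x) with hg
  have hgt : ∀ x, g x = true ↔ 2 ^ n ≤ 2 * T x := by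
    intro x; simp [hg]
  have hjunta : IsKJunta k g := by
    refine ⟨J, hJ, fun x y hxy => ?_⟩
    have : T x = T y := by
      simp only [hT]
      congr 1
      apply Finset.filter_congr
      intro v _
      have : c x v = c y v := by
        funext i; by_cases h : i ∈ J <;> simp [hc, h, hxy i]
      rw [this]
    simp [hg, this]
  -- the target set, and its count as a sum
  set S1 := ((satOf f ×ˢ (Finset.univ : Finset (Fin n → Bool))).filter
      (fun p => f (c p.1 p.2) = false)) with hS1
  have hcount1 : S1.card = ∑ u ∈ satOf f, F u := by
    rw [hS1, Finset.card_filter, Finset.sum_product]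
    exact Finset.sum_congr rfl fun u _ => (Finset.card_filter _ _).symm
  set S2 := (((Finset.univ : Finset (Fin n → Bool)).filter (fun x => f x = false)
        ×ˢ (Finset.univ : Finset (Fin n → Bool))).filter
      (fun p => f (c p.1 p.2) = true)) with hS2
  have hbij : S1.card = S2.card := by
    apply Finset.card_bij (fun p _ => (c p.1 p.2, c p.2 p.1))
    · intro p hp
      simp only [hS1, hS2, satOf, Finset.mem_filter, Finset.mem_product,
        Finset.mem_univ, true_and, and_true] at hp ⊢
      exact ⟨hp.2, by rw [hcc]; exact hp.1⟩
    · intro p hp q hq h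
      have h1 : c p.1 p.2 = c q.1 q.2 := congrArg Prod.fst h
      have h2 : c p.2 p.1 = c q.2 q.1 := congrArg Prod.snd h
      have e1 : p.1 = q.1 := by
        rw [← hcc p.1 p.2, ← hcc q.1 q.2, h1, h2]
      have e2 : p.2 = q.2 := by
        rw [← hcc p.2 p.1, ← hcc q.2 q.1, h1, h2]
      exact Prod.ext e1 e2
    · intro q hq
      simp only [hS2, Finset.mem_filter, Finset.mem_product, Finset.mem_univ,
        true_and, and_true] at hq
      refine ⟨(c q.1 q.2, c q.2 q.1), ?_, ?_⟩
      · simp only [hS1, satOf, Finset.mem_filter, Finset.mem_product,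
          Finset.mem_univ, true_and, and_true]
        exact ⟨hq.2, by rw [hcc]; exact hq.1⟩
      · rw [hcc, hcc]
  have hcount2 : S2.card = ∑ x ∈ (Finset.univ : Finset (Fin n → Bool)).filter
      (fun x => f x = false), T x := by
    rw [hS2, Finset.card_filter, Finset.sum_product]
    exact Finset.sum_congr rfl fun u _ => (Finset.card_filter _ _).symm
  set D1 := ((satOf f).filter (fun x => g x = false)).card with hD1
  set D0 := (((Finset.univ : Finset (Fin n → Bool)).filter (fun x => f x = false)).filter
      (fun x => g x = true)).card with hD0
  -- key inequalities
  have key1 : D1 * 2 ^ n ≤ 2 * S1.card := by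
    rw [hcount1]
    calc D1 * 2 ^ n = ∑ _u ∈ (satOf f).filter (fun x => g x = false), 2 ^ n := by
          rw [Finset.sum_const, smul_eq_mul]
      _ ≤ ∑ u ∈ (satOf f).filter (fun x => g x = false), 2 * F u := by
          apply Finset.sum_le_sum
          intro u hu
          have hgu : g u = false := (Finset.mem_filter.mp hu).2
          have : ¬ (2 ^ n ≤ 2 * T u) := by
            intro hcon
            have := (hgt u).mpr hcon
            rw [hgu] at this; exact Bool.false_ne_true this
          have := hTF u
          omega
      _ = 2 * ∑ u ∈ (satOf f).filter (fun x => g x = false), F u := by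
          rw [Finset.mul_sum]
      _ ≤ 2 * ∑ u ∈ satOf f, F u := by
          apply Nat.mul_le_mul_left
          exact Finset.sum_le_sum_of_subset (Finset.filter_subset _ _)
  have key0 : D0 * 2 ^ n ≤ 2 * S1.card := by
    rw [hbij, hcount2]
    calc D0 * 2 ^ n
        = ∑ _u ∈ ((Finset.univ : Finset (Fin n → Bool)).filter (fun x => f x = false)).filter
            (fun x => g x = true), 2 ^ n := by
          rw [Finset.sum_const, smul_eq_mul]
      _ ≤ ∑ u ∈ ((Finset.univ : Finset (Fin n → Bool)).filter (fun x => f x = false)).filter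
            (fun x => g x = true), 2 * T u := by
          apply Finset.sum_le_sum
          intro u hu
          have hgu : g u = true := (Finset.mem_filter.mp hu).2
          exact (hgt u).mp hgu
      _ = 2 * ∑ u ∈ ((Finset.univ : Finset (Fin n → Bool)).filter (fun x => f x = false)).filter
            (fun x => g x = true), T u := by
          rw [Finset.mul_sum]
      _ ≤ 2 * ∑ u ∈ (Finset.univ : Finset (Fin n → Bool)).filter (fun x => f x = false), T u := by
          apply Nat.mul_le_mul_left
          exact Finset.sum_le_sum_of_subset (Finset.filter_subset _ _)
  -- symmetric difference decomposition
  have hD : (satOf f ∆ satOf g).card = D1 + D0 := by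
    have hset : satOf f ∆ satOf g =
        ((satOf f).filter (fun x => g x = false)) ∪
        (((Finset.univ : Finset (Fin n → Bool)).filter (fun x => f x = false)).filter
          (fun x => g x = true)) := by
      ext x
      simp only [Finset.mem_symmDiff, satOf, Finset.mem_filter, Finset.mem_union,
        Finset.mem_univ, true_and]
      cases hfx : f x <;> cases hgx : g x <;> simp
    rw [hset, Finset.card_union_of_disjoint]
    apply Finset.disjoint_left.mpr
    intro x hx1 hx2
    have h1 : f x = true := (Finset.mem_filter.mp ((Finset.mem_filter.mp hx1).1)).2
    have h2 : f x = false := (Finset.mem_filter.mp ((Finset.mem_filter.mp hx2).1)).2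
    rw [h1] at h2; exact Bool.noConfusion h2
  have hDcount : (satOf f ∆ satOf g).card * 2 ^ n ≤ 4 * S1.card := by
    rw [hD, Nat.add_mul]; omega
  -- real arithmetic
  have hN : (0 : ℝ) < (satOf f).card := by
    exact_mod_cast Finset.card_pos.mpr hne
  have hε : ε ≤ ((satOf f ∆ satOf g).card : ℝ) / ((satOf f).card : ℝ) := hfar g hjunta
  have hεN : ε * ((satOf f).card : ℝ) ≤ ((satOf f ∆ satOf g).card : ℝ) :=
    (le_div_iff₀ hN).mp hε
  have hcast : ((satOf f ∆ satOf g).card : ℝ) * 2 ^ n ≤ 4 * (S1.card : ℝ) := by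
    have := hDcount
    exact_mod_cast this
  have h2 : ε * ((satOf f).card : ℝ) * 2 ^ n ≤ ((satOf f ∆ satOf g).card : ℝ) * 2 ^ n :=
    mul_le_mul_of_nonneg_right hεN (by positivity)
  nlinarith [h2, hcast]
end

section
/- Let f : {0,1}^n → {0,1} be a nonzero function that is ε-far in relative distance from every k-junta. Let X ⊆ [n] be such that Pr_{u~f⁻¹(1), w~{0,1}^{X̄}}[f(u) ≠ f(u_X ∘ w)] ≤ ε/20, and let J ⊆ X with |J| ≤ k. Then Pr_{u~f⁻¹(1), w~{0,1}^{X̄}, y~{0,1}^{X∖J}}[f(u_X ∘ w) ≠ f(u_J ∘ y ∘ w)] ≥ ε/5. -/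
open Finset
open scoped symmDiff

/-! Let `g` be the `J`-junta taking, on each fibre `{x | x_J = a}`, the majority value of `f`.
A point where `f` and `g` differ is in the minority of its fibre, so resampling its coordinates
outside `J` changes the value of `f` with probability at least `1/2`; since flips `1 → 0` and
`0 → 1` are equally frequent, this gives `Pr_{u ∼ f⁻¹(1), y}[f u ≠ f (u_J ∘ y)] ≥ relDist f g / 4
≥ ε / 4`. Resampling `X ∖ J` and `[n] ∖ X` independently is the same as resampling `[n] ∖ J`, and
`f u ≠ f (u_J ∘ y ∘ w)` forces `f u ≠ f (u_X ∘ w)` or `f (u_X ∘ w) ≠ f (u_J ∘ y ∘ w)`, so the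
latter has probability at least `ε / 4 - ε / 20 = ε / 5`. -/

theorem card_filter_product_eq_sum {α γ : Type*} (s : Finset α) (t : Finset γ)
    (P : α × γ → Prop) [DecidablePred P] :
    #{p ∈ s ×ˢ t | P p} = ∑ a ∈ s, #{c ∈ t | P (a, c)} := by
  simp only [card_filter, sum_product]

theorem card_filter_product_product_fst {α γ δ : Type*} (s : Finset α) (t : Finset γ)
    (u : Finset δ) (P : α × γ → Prop) [DecidablePred P] :
    #{p ∈ s ×ˢ (t ×ˢ u) | P (p.1, p.2.1)} = #{q ∈ s ×ˢ t | P q} * #u := by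
  rw [card_filter_product_eq_sum, card_filter_product_eq_sum, sum_mul]
  refine sum_congr rfl fun a _ => ?_
  rw [filter_product_left (fun c => P (a, c)), card_product]

theorem card_filter_ne_le_add {α γ : Type*} [DecidableEq γ] (s : Finset α) (a b c : α → γ) :
    #{p ∈ s | a p ≠ c p} ≤ #{p ∈ s | b p ≠ c p} + #{p ∈ s | a p ≠ b p} := by
  classical
  refine (card_le_card fun p hp => ?_).trans (card_union_le _ _)
  simp only [mem_union, mem_filter] at hp ⊢
  by_cases hab : a p = b p
  · exact .inl ⟨hp.1, hab ▸ hp.2⟩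
  · exact .inr ⟨hp.1, hab⟩

section Resampling

variable {ι β : Type*} [Fintype ι] [DecidableEq ι] [Fintype β]

theorem card_filter_piecewise_eq_card_filter_fst (s : Finset ι) (P : (ι → β) → Prop)
    [DecidablePred P] :
    #{c ∈ (univ : Finset (ι → β)) ×ˢ (univ : Finset (ι → β)) | P (s.piecewise c.2 c.1)}
      = #{c ∈ (univ : Finset (ι → β)) ×ˢ (univ : Finset (ι → β)) | P c.1} := by
  refine card_nbij' (fun c => (s.piecewise c.2 c.1, s.piecewise c.1 c.2))
    (fun c => (s.piecewise c.2 c.1, s.piecewise c.1 c.2)) ?_ ?_ ?_ ?_ <;>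
    intro c <;> simp [piecewise_same]

theorem card_filter_piecewise_piecewise_eq_mul (S : Finset (ι → β)) (X J : Finset ι)
    (P : (ι → β) × (ι → β) → Prop) [DecidablePred P] :
    #{p ∈ S ×ˢ ((univ : Finset (ι → β)) ×ˢ (univ : Finset (ι → β))) |
        P (p.1, J.piecewise p.1 (X.piecewise p.2.2 p.2.1))}
      = #{q ∈ S ×ˢ univ | P (q.1, J.piecewise q.1 q.2)} * Fintype.card (ι → β) := by
  calc _ = #{p ∈ S ×ˢ ((univ : Finset (ι → β)) ×ˢ (univ : Finset (ι → β))) |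
          P (p.1, J.piecewise p.1 p.2.1)} := by
        rw [card_filter_product_eq_sum, card_filter_product_eq_sum]
        exact sum_congr rfl fun u _ =>
          card_filter_piecewise_eq_card_filter_fst X (fun w => P (u, J.piecewise u w))
    _ = _ := card_filter_product_product_fst S univ univ (fun q => P (q.1, J.piecewise q.1 q.2))

def resampleCount (f : (ι → β) → Bool) (J : Finset ι) (b : Bool) (x : ι → β) : ℕ :=
  #{v | f (J.piecewise x v) = b}

def resampleMajority (f : (ι → β) → Bool) (J : Finset ι) (x : ι → β) : Bool :=
  decide (resampleCount f J false x ≤ resampleCount f J true x)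

theorem resampleCount_false_add_true (f : (ι → β) → Bool) (J : Finset ι) (x : ι → β) :
    resampleCount f J false x + resampleCount f J true x = Fintype.card (ι → β) := by
  simpa [resampleCount] using
    card_filter_add_card_filter_not (s := univ) (fun v => f (J.piecewise x v) = false)

theorem sum_resampleCount_true_eq_sum_resampleCount_false (f : (ι → β) → Bool) (J : Finset ι) :
    ∑ x ∈ {x | f x = false}, resampleCount f J true x
      = ∑ u ∈ {u | f u = true}, resampleCount f J false u := by
  have hsum (b c : Bool) : ∑ u ∈ {u | f u = b}, resampleCount f J c u
      = #{q ∈ ({u | f u = b} : Finset _) ×ˢ univ | f (J.piecewise q.1 q.2) = c} :=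
    (card_filter_product_eq_sum _ _ (fun q => f (J.piecewise q.1 q.2) = c)).symm
  rw [hsum, hsum]
  -- `(u, v) ↦ (u_J ∘ v_{Jᶜ}, v_J ∘ u_{Jᶜ})` is an involution exchanging the two sets of pairs.
  refine card_nbij' (fun q => (J.piecewise q.1 q.2, J.piecewise q.2 q.1))
    (fun q => (J.piecewise q.1 q.2, J.piecewise q.2 q.1)) ?_ ?_ ?_ ?_ <;>
    intro q <;> simp +contextual [piecewise_same]

theorem card_filter_ne_resample_eq_sum (f : (ι → β) → Bool) (J : Finset ι) :
    #{q ∈ ({u | f u = true} : Finset _) ×ˢ univ |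
        f q.1 ≠ f (J.piecewise q.1 q.2)}
      = ∑ u ∈ {u | f u = true}, resampleCount f J false u := by
  rw [card_filter_product_eq_sum]
  refine sum_congr rfl fun u hu => congrArg card (filter_congr fun v _ => ?_)
  rw [(mem_filter.mp hu).2]
  simp

theorem card_mul_card_symmDiff_resampleMajority_le [DecidableEq β] (f : (ι → β) → Bool)
    (J : Finset ι) :
    Fintype.card (ι → β) *
        #(({x | f x = true} : Finset _) ∆ ({x | resampleMajority f J x} : Finset _))
      ≤ 4 * #{q ∈ ({u | f u = true} : Finset _) ×ˢ univ |
          f q.1 ≠ f (J.piecewise q.1 q.2)} := by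
  set S : Finset (ι → β) := {x | f x = true}
  set G : Finset (ι → β) := {x | resampleMajority f J x}
  set N := Fintype.card (ι → β)
  rw [card_filter_ne_resample_eq_sum]
  have hSG : N * #(S \ G) ≤ 2 * ∑ u ∈ S, resampleCount f J false u :=
    calc N * #(S \ G) = #(S \ G) • N := mul_comm _ _
      _ ≤ ∑ x ∈ S \ G, 2 * resampleCount f J false x := by
        refine card_nsmul_le_sum _ _ _ fun x hx => ?_
        have hx : ¬ resampleCount f J false x ≤ resampleCount f J true x := by
          simpa [S, G, resampleMajority] using (mem_sdiff.mp hx).2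
        have := resampleCount_false_add_true f J x
        omega
      _ ≤ 2 * ∑ u ∈ S, resampleCount f J false u := by
        rw [← mul_sum]
        exact Nat.mul_le_mul_left _ (sum_le_sum_of_subset sdiff_subset)
  have hGS : N * #(G \ S) ≤ 2 * ∑ u ∈ S, resampleCount f J false u :=
    calc N * #(G \ S) = #(G \ S) • N := mul_comm _ _
      _ ≤ ∑ x ∈ G \ S, 2 * resampleCount f J true x := by
        refine card_nsmul_le_sum _ _ _ fun x hx => ?_
        have hx : resampleCount f J false x ≤ resampleCount f J true x := by
          simpa [S, G, resampleMajority] using (mem_sdiff.mp hx).1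
        have := resampleCount_false_add_true f J x
        omega
      _ ≤ 2 * ∑ x ∈ {x | f x = false}, resampleCount f J true x := by
        rw [← mul_sum]
        refine Nat.mul_le_mul_left _ (sum_le_sum_of_subset fun x hx => ?_)
        simpa [S] using (mem_sdiff.mp hx).2
      _ = 2 * ∑ u ∈ S, resampleCount f J false u := by
        rw [sum_resampleCount_true_eq_sum_resampleCount_false]
  calc N * #(S ∆ G) ≤ N * (#(S \ G) + #(G \ S)) :=
        Nat.mul_le_mul_left _ (symmDiff_def S G ▸ card_union_le _ _)
    _ ≤ 4 * ∑ u ∈ S, resampleCount f J false u := by rw [mul_add]; omega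

end Resampling

theorem isJuntaOn_resampleMajority {n : ℕ} (f : (Fin n → Bool) → Bool) (J : Finset (Fin n)) :
    IsJuntaOn J (resampleMajority f J) := by
  intro x y hxy
  have hcount (b : Bool) : resampleCount f J b x = resampleCount f J b y :=
    congrArg card (filter_congr fun v _ => by rw [J.piecewise_congr hxy fun _ _ => rfl])
  rw [resampleMajority, resampleMajority, hcount, hcount]

theorem relDist_resampleMajority_mul_le {n : ℕ} (f : (Fin n → Bool) → Bool)
    (J : Finset (Fin n)) :
    relDist f (resampleMajority f J) * (#(satOf f) * 2 ^ n)
      ≤ 4 * #{q ∈ satOf f ×ˢ univ | f q.1 ≠ f (J.piecewise q.1 q.2)} := by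
  rcases (satOf f).eq_empty_or_nonempty with hS | hS
  · simp [hS]
  have key := card_mul_card_symmDiff_resampleMajority_le f J
  simp only [Fintype.card_fun, Fintype.card_bool, Fintype.card_fin] at key
  calc relDist f (resampleMajority f J) * (#(satOf f) * 2 ^ n)
      = 2 ^ n * #(satOf f ∆ satOf (resampleMajority f J)) := by
        have : (#(satOf f) : ℝ) ≠ 0 := by simpa using hS.ne_empty
        rw [relDist]
        field_simp
    _ ≤ _ := by exact_mod_cast key

theorem stmt8_general {n : ℕ} (k : ℕ) (ε : ℝ) (f : (Fin n → Bool) → Bool)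
    (hfar : ∀ g : (Fin n → Bool) → Bool, IsKJunta k g → ε ≤ relDist f g)
    (X J : Finset (Fin n)) (hJ : J.card ≤ k)
    (hX : (((satOf f ×ˢ (Finset.univ : Finset (Fin n → Bool))).filter
            (fun p => f p.1 ≠ f (fun i => if i ∈ X then p.1 i else p.2 i))).card : ℝ)
          ≤ (ε / 20) * (((satOf f).card : ℝ) * 2 ^ n)) :
    (ε / 5) * (((satOf f).card : ℝ) * 2 ^ n * 2 ^ n)
      ≤ (((satOf f ×ˢ ((Finset.univ : Finset (Fin n → Bool)) ×ˢ
              (Finset.univ : Finset (Fin n → Bool)))).filter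
            (fun p => f (fun i => if i ∈ X then p.1 i else p.2.1 i)
                ≠ f (fun i => if i ∈ J then p.1 i else
                      if i ∈ X then p.2.2 i else p.2.1 i))).card : ℝ) := by
  have hpiecewise (s : Finset (Fin n)) (x y : Fin n → Bool) :
      (fun i => if i ∈ s then x i else y i) = s.piecewise x y := rfl
  simp only [hpiecewise] at hX ⊢
  have hN : (0 : ℝ) ≤ 2 ^ n := by positivity
  have hresample : ε * (#(satOf f) * 2 ^ n)
      ≤ 4 * #{q ∈ satOf f ×ˢ univ | f q.1 ≠ f (J.piecewise q.1 q.2)} :=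
    (mul_le_mul_of_nonneg_right (hfar _ ⟨J, hJ, isJuntaOn_resampleMajority f J⟩)
      (by positivity)).trans (relDist_resampleMajority_mul_le f J)
  have htriangle := card_filter_ne_le_add (satOf f ×ˢ (univ ×ˢ univ)) (fun p => f p.1)
    (fun p => f (X.piecewise p.1 p.2.1)) (fun p => f (J.piecewise p.1 (X.piecewise p.2.2 p.2.1)))
  rw [card_filter_piecewise_piecewise_eq_mul (satOf f) X J (fun q => f q.1 ≠ f q.2),
    card_filter_product_product_fst (satOf f) univ univ
      (fun q => f q.1 ≠ f (X.piecewise q.1 q.2))] at htriangle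
  simp only [card_univ, Fintype.card_fun, Fintype.card_bool, Fintype.card_fin] at htriangle
  replace htriangle := (Nat.cast_le (α := ℝ)).mpr htriangle
  push_cast at htriangle
  linarith [mul_le_mul_of_nonneg_right hresample hN, mul_le_mul_of_nonneg_right hX hN]

/-- Key lemma for the junta tester: if f is ε-far in relative distance from every k-junta,
X satisfies the ε/20 consistency condition, and J ⊆ X with |J| ≤ k, then resampling the
coordinates of X ∖ J changes the value of f with probability at least ε/5.  Probabilities
are expressed via counting; the roles of w ∈ {0,1}^{X̄} and y ∈ {0,1}^{X∖J} are played by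
full uniform strings v and z, reading only the relevant coordinates. -/
theorem stmt8 {n : ℕ} (k : ℕ) (ε : ℝ) (f : (Fin n → Bool) → Bool)
    (hne : (satOf f).Nonempty)
    (hfar : ∀ g : (Fin n → Bool) → Bool, IsKJunta k g → ε ≤ relDist f g)
    (X J : Finset (Fin n)) (hJX : J ⊆ X) (hJ : J.card ≤ k)
    (hX : (((satOf f ×ˢ (Finset.univ : Finset (Fin n → Bool))).filter
            (fun p => f p.1 ≠ f (fun i => if i ∈ X then p.1 i else p.2 i))).card : ℝ)
          ≤ (ε / 20) * (((satOf f).card : ℝ) * 2 ^ n)) :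
    (ε / 5) * (((satOf f).card : ℝ) * 2 ^ n * 2 ^ n)
      ≤ (((satOf f ×ˢ ((Finset.univ : Finset (Fin n → Bool)) ×ˢ
              (Finset.univ : Finset (Fin n → Bool)))).filter
            (fun p => f (fun i => if i ∈ X then p.1 i else p.2.1 i)
                ≠ f (fun i => if i ∈ J then p.1 i else
                      if i ∈ X then p.2.2 i else p.2.1 i))).card : ℝ) :=
  stmt8_general k ε f hfar X J hJ hX
end

section
/- Let f : {0,1}^n → {0,1} with N = |f⁻¹(1)| > 0, let S ⊆ [n], and define G(x) = 1 iff Pr_{w~{0,1}^{S̄}}[f(x_S ∘ w) = 1] ≥ 1/2. If a ∈ G⁻¹(1), then the number of y ∈ f⁻¹(1) with y_S = a_S is at least 2^{|S̄|}/2, and hence Pr_{u~f⁻¹(1), w~{0,1}^{S̄}}[u_S ∘ w = a] ≥ 1/(2N). Consequently, if |G⁻¹(1) ∖ f⁻¹(1)| ≥ κN/2, then Pr_{u~f⁻¹(1), w~{0,1}^{S̄}}[f(u_S ∘ w) = 0] ≥ κ/4. -/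
/-
A vector `v` fills the coordinates outside `S` of the point `S.piecewise a v`. For a majority
point `a`, at least `2 ^ n / 2` of the `2 ^ n` fillings land in `f⁻¹(1)`, and each point agreeing
with `a` on `S` is reached by at most `2 ^ |S|` of them; this counts the satisfying `y` with
`y_S = a_S`. The map `v ↦ (S.piecewise a v, S.piecewise v a)` is a bijection from those fillings
onto the pairs `(u, w)` with `u_S ∘ w = a`, which gives the probability bound. Each majority point
outside `f⁻¹(1)` is such an `a` at which `f` vanishes, so summing over them gives the last claim.
-/

open Finset

/-- The majority-vote function: `majOf f S x = 1` iff rerandomizing the coordinates outside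
`S` yields a satisfying assignment of `f` with probability at least 1/2 (ties toward 1). -/
def majOf {n : ℕ} (f : (Fin n → Bool) → Bool) (S : Finset (Fin n)) :
    (Fin n → Bool) → Bool :=
  fun x => decide (2 ^ n ≤ 2 * (Finset.univ.filter
    (fun v : Fin n → Bool => f (fun i => if i ∈ S then x i else v i) = true)).card)

section Piecewise

variable {ι β : Type*} [Fintype ι] [DecidableEq ι] [Fintype β] [DecidableEq β]

lemma card_filter_piecewise_eq_le (S : Finset ι) (a y : ι → β) :
    #{v | S.piecewise a v = y} ≤ Fintype.card β ^ #S := by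
  calc #{v | S.piecewise a v = y} ≤ #(univ : Finset (S → β)) := by
        refine card_le_card_of_injOn (fun v i => v i) (by simp) fun v₁ hv₁ v₂ hv₂ h => ?_
        simp only [coe_filter, mem_univ, true_and, Set.mem_ofPred_eq] at hv₁ hv₂
        funext i
        by_cases hi : i ∈ S
        · exact congrFun h ⟨i, hi⟩
        · rw [← piecewise_eq_of_notMem _ a v₁ hi, ← piecewise_eq_of_notMem _ a v₂ hi, hv₁, hv₂]
    _ = Fintype.card β ^ #S := by simp

lemma card_filter_piecewise_mem_le (S : Finset ι) (a : ι → β) (s : Finset (ι → β)) :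
    #{v | S.piecewise a v ∈ s} ≤ Fintype.card β ^ #S * #{y ∈ s | ∀ i ∈ S, y i = a i} := by
  refine card_le_mul_card_image_of_maps_to (f := fun v => S.piecewise a v) (fun v hv => ?_) _
    fun y _ => (card_le_card fun v hv => ?_).trans (card_filter_piecewise_eq_le S a y)
  · simp only [mem_filter, mem_univ, true_and] at hv ⊢
    exact ⟨hv, fun i hi => piecewise_eq_of_mem _ _ _ hi⟩
  · simp only [mem_filter, mem_univ, true_and] at hv ⊢
    exact hv.2

lemma card_filter_piecewise_mem_eq (S : Finset ι) (a : ι → β) (s : Finset (ι → β)) :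
    #{v | S.piecewise a v ∈ s} = #{p ∈ s ×ˢ univ | S.piecewise p.1 p.2 = a} := by
  refine card_nbij' (fun v => (S.piecewise a v, S.piecewise v a)) (fun p => S.piecewise p.2 p.1)
    ?_ ?_ ?_ ?_
  · intro v hv
    simp_all [piecewise_idem_left, piecewise_idem_right, piecewise_same]
  · intro p hp
    simp only [coe_filter, mem_product, mem_univ, and_true, Set.mem_ofPred_eq] at hp
    obtain ⟨hp, rfl⟩ := hp
    simpa [piecewise_idem_left, piecewise_idem_right, piecewise_same] using hp
  · intro v _
    simp [piecewise_idem_left, piecewise_idem_right, piecewise_same]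
  · intro p hp
    simp only [coe_filter, mem_product, mem_univ, and_true, Set.mem_ofPred_eq] at hp
    obtain ⟨-, rfl⟩ := hp
    simp [piecewise_idem_left, piecewise_idem_right, piecewise_same]

end Piecewise

lemma card_mul_le_mul_card_filter_mem {α γ : Type*} [DecidableEq γ] (g : α → γ) (s : Finset α)
    (B : Finset γ) (m c : ℕ) (h : ∀ b ∈ B, m ≤ c * #{x ∈ s | g x = b}) :
    #B * m ≤ c * #{x ∈ s | g x ∈ B} :=
  calc #B * m = ∑ _b ∈ B, m := by simp
    _ ≤ ∑ b ∈ B, c * #{x ∈ s | g x = b} := sum_le_sum h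
    _ = c * #{x ∈ s | g x ∈ B} := by
      rw [card_eq_sum_card_fiberwise (s := {x ∈ s | g x ∈ B}) (t := B) fun x hx =>
        (mem_filter.1 hx).2, mul_sum]
      refine sum_congr rfl fun b hb => ?_
      rw [filter_filter]
      congr 2
      ext x
      simp only [mem_filter]
      exact ⟨fun hx => ⟨hx.1, hx.2 ▸ hb, hx.2⟩, fun hx => ⟨hx.1, hx.2.2⟩⟩

section Majority

variable {n : ℕ} (f : (Fin n → Bool) → Bool) (S : Finset (Fin n))

lemma mem_satOf_majOf {x : Fin n → Bool} :
    x ∈ satOf (majOf f S) ↔ 2 ^ n ≤ 2 * #{v | S.piecewise x v ∈ satOf f} := by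
  simp [satOf, majOf, ← piecewise.eq_1]

variable {f S}

lemma two_pow_sub_card_le_of_mem_satOf_majOf {a : Fin n → Bool} (ha : a ∈ satOf (majOf f S)) :
    2 ^ (n - #S) ≤ 2 * #{y ∈ satOf f | ∀ i ∈ S, y i = a i} := by
  have h := ((mem_satOf_majOf f S).1 ha).trans
    (Nat.mul_le_mul_left 2 (card_filter_piecewise_mem_le S a (satOf f)))
  rw [Fintype.card_bool, ← pow_sub_mul_pow 2 ((card_le_univ S).trans_eq (Fintype.card_fin n)),
    mul_left_comm, mul_comm] at h
  -- `convert` reconciles the instance `Nat.decidableForallFin` with the generic one for `∀ i ∈ S, _`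
  convert Nat.le_of_mul_le_mul_left h (pow_pos two_pos _) using 4

lemma two_pow_le_two_mul_card_piecewise_eq {a : Fin n → Bool} (ha : a ∈ satOf (majOf f S)) :
    2 ^ n ≤ 2 * #{p ∈ satOf f ×ˢ univ | S.piecewise p.1 p.2 = a} :=
  card_filter_piecewise_mem_eq S a (satOf f) ▸ (mem_satOf_majOf f S).1 ha

variable (f S)

lemma card_sdiff_mul_two_pow_le :
    #(satOf (majOf f S) \ satOf f) * 2 ^ n
      ≤ 2 * #{p ∈ satOf f ×ˢ univ | f (S.piecewise p.1 p.2) = false} := by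
  refine (card_mul_le_mul_card_filter_mem _ _ _ _ _ fun a ha =>
    two_pow_le_two_mul_card_piecewise_eq (mem_sdiff.1 ha).1).trans
    (Nat.mul_le_mul_left 2 (card_le_card (monotone_filter_right _ fun p hp => ?_)))
  simp_all [satOf]

end Majority

theorem stmt11_general {n : ℕ} (f : (Fin n → Bool) → Bool) (S : Finset (Fin n)) (κ : ℝ) :
    (∀ a ∈ satOf (majOf f S),
        ((2 : ℝ) ^ (n - S.card)) / 2
          ≤ (((satOf f).filter (fun y => ∀ i ∈ S, y i = a i)).card : ℝ)) ∧
    (∀ a ∈ satOf (majOf f S),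
        (1 / (2 * ((satOf f).card : ℝ))) * (((satOf f).card : ℝ) * 2 ^ n)
          ≤ (((satOf f ×ˢ (Finset.univ : Finset (Fin n → Bool))).filter
                (fun p => (fun i => if i ∈ S then p.1 i else p.2 i) = a)).card : ℝ)) ∧
    (κ * ((satOf f).card : ℝ) / 2 ≤ ((satOf (majOf f S) \ satOf f).card : ℝ) →
        (κ / 4) * (((satOf f).card : ℝ) * 2 ^ n)
          ≤ (((satOf f ×ˢ (Finset.univ : Finset (Fin n → Bool))).filter
                (fun p => f (fun i => if i ∈ S then p.1 i else p.2 i) = false)).card : ℝ)) := by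
  simp only [← piecewise.eq_1]
  refine ⟨fun a ha => ?_, fun a ha => ?_, fun hκ => ?_⟩
  · rw [div_le_iff₀ two_pos, mul_comm]
    exact_mod_cast two_pow_sub_card_le_of_mem_satOf_majOf ha
  · have h : (2 : ℝ) ^ n ≤ 2 * #{p ∈ satOf f ×ˢ univ | S.piecewise p.1 p.2 = a} := by
      exact_mod_cast two_pow_le_two_mul_card_piecewise_eq ha
    set N : ℝ := (#(satOf f) : ℝ)
    calc 1 / (2 * N) * (N * 2 ^ n) = N / N * 2 ^ n / 2 := by ring
      _ ≤ 1 * 2 ^ n / 2 := by gcongr; exact div_self_le_one N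
      _ ≤ _ := by linarith
  · have h : (#(satOf (majOf f S) \ satOf f) * 2 ^ n : ℝ)
        ≤ 2 * #{p ∈ satOf f ×ˢ univ | f (S.piecewise p.1 p.2) = false} := by
      exact_mod_cast card_sdiff_mul_two_pow_le f S
    calc κ / 4 * (#(satOf f) * 2 ^ n) = κ * #(satOf f) / 2 * 2 ^ n / 2 := by ring
      _ ≤ #(satOf (majOf f S) \ satOf f) * 2 ^ n / 2 := by gcongr
      _ ≤ _ := by linarith

theorem stmt11 {n : ℕ} (f : (Fin n → Bool) → Bool) (S : Finset (Fin n)) (κ : ℝ)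
    (hne : (satOf f).Nonempty) :
    (∀ a ∈ satOf (majOf f S),
        ((2 : ℝ) ^ (n - S.card)) / 2
          ≤ (((satOf f).filter (fun y => ∀ i ∈ S, y i = a i)).card : ℝ)) ∧
    (∀ a ∈ satOf (majOf f S),
        (1 / (2 * ((satOf f).card : ℝ))) * (((satOf f).card : ℝ) * 2 ^ n)
          ≤ (((satOf f ×ˢ (Finset.univ : Finset (Fin n → Bool))).filter
                (fun p => (fun i => if i ∈ S then p.1 i else p.2 i) = a)).card : ℝ)) ∧
    (κ * ((satOf f).card : ℝ) / 2 ≤ ((satOf (majOf f S) \ satOf f).card : ℝ) →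
        (κ / 4) * (((satOf f).card : ℝ) * 2 ^ n)
          ≤ (((satOf f ×ˢ (Finset.univ : Finset (Fin n → Bool))).filter
                (fun p => f (fun i => if i ∈ S then p.1 i else p.2 i) = false)).card : ℝ)) :=
  stmt11_general f S κ
end
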